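/- Best approximation for the projection-stabilised Lagrange multiplier method (Theorem 2.3, error estimate): Suppose (u, λ) ∈ V × L solves the continuous problem and (u_h, λ_h) ∈ V_h × Λ_h solves the stabilised discrete problem with the same right-hand side F. Then there exists a constant C > 0, depending only on the constants of the framework (M_a, M_b, β, C_V, C_F, C_π, C_s, α_ξ, c_s) and not on u, λ or F, such that ‖u − u_h‖_V + ‖λ − λ_h‖_L ≤ C · ( inf over y_h ∈ V_h of ‖u − y_h‖_V + inf over ν_h ∈ Λ_h of ( ‖λ − ν_h‖_L + s(ν_h, ν_h)^{1/2} ) ). -/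

import Mathlib

/-!
Fix approximants `w = π_F u` and `ν ∈ Λ_h`, and write `e = u_h - w`, `g = λ_h - ν`. Testing the
error equations with `e` and with `ξ_h e` gives an energy and a coercivity estimate for
`‖e‖_{V_h}` and `√s(g,g)`. The consistency terms `b(·, u - π_F u)` only see the part `x - π_L x`
of a multiplier, because `u - π_F u` is `b`-orthogonal to `L_h`, so they are controlled by `√s`.
The cross term `c_s ‖e‖_{V_h} √s(g,g)` is absorbed by Young's inequality, which is where
`c_s² < 2 α_ξ` enters. The inf-sup condition, tested through `π_F`, then bounds `‖g‖_L`, and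
`‖u - π_F u‖ ≤ (1 + C_F) ‖u - y_h‖` for every `y_h ∈ V_h`.
-/

open Real

theorem abs_apply_le_sqrt_mul_sqrt {M : Type*} [AddCommGroup M] [Module ℝ M]
    (s : M →ₗ[ℝ] M →ₗ[ℝ] ℝ) {W : Submodule ℝ M}
    (hs_symm : ∀ x ∈ W, ∀ y ∈ W, s x y = s y x) (hs_pos : ∀ x ∈ W, 0 ≤ s x x)
    {x y : M} (hx : x ∈ W) (hy : y ∈ W) :
    |s x y| ≤ √(s x x) * √(s y y) := by
  rw [← sqrt_mul (hs_pos x hx)]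
  refine abs_le_sqrt ?_
  have hquad : ∀ t : ℝ, 0 ≤ s y y * (t * t) + 2 * s x y * t + s x x := fun t => by
    have := hs_pos (x + t • y) (W.add_mem hx (W.smul_mem t hy))
    simp only [map_add, map_smul, LinearMap.add_apply, LinearMap.smul_apply, smul_eq_mul,
      hs_symm y hy x hx] at this
    linarith
  have := discrim_le_zero hquad
  rw [discrim] at this
  linarith

theorem norm_sub_apply_le_of_apply_eq {V : Type*} [SeminormedAddCommGroup V] [Module ℝ V]
    (P : V →ₗ[ℝ] V) {C : ℝ} (hP : ∀ v, ‖P v‖ ≤ C * ‖v‖) {y : V} (hy : P y = y) (u : V) :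
    ‖u - P u‖ ≤ (1 + C) * ‖u - y‖ := by
  have hsplit : u - P u = (u - y) - P (u - y) := by rw [map_sub, hy]; abel
  rw [hsplit]
  linarith [norm_sub_le (u - y) (P (u - y)), hP (u - y)]

theorem iSup_div_norm_le {V : Type*} [SeminormedAddCommGroup V] {f : V → ℝ} {K : ℝ}
    (hK : 0 ≤ K) (hf : ∀ v, f v ≤ K * ‖v‖) : ⨆ v : {v : V // v ≠ 0}, f v / ‖(v : V)‖ ≤ K := by
  rcases isEmpty_or_nonempty {v : V // v ≠ 0} with h | h
  · rw [iSup_of_isEmpty]; exact hK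
  · exact ciSup_le fun v => div_le_of_le_mul₀ (norm_nonneg _) hK (hf v)

theorem add_le_of_mul_sq_add_mul_sq_le {X Y E δ γ : ℝ} (hX : 0 ≤ X) (hY : 0 ≤ Y) (hE : 0 ≤ E)
    (hδ : 0 < δ) (hγ : 0 < γ) (h : δ * X ^ 2 + γ * Y ^ 2 ≤ (X + Y) * E) :
    X + Y ≤ 2 * E / min δ γ := by
  have hm : 0 < min δ γ := lt_min hδ hγ
  have hsq : min δ γ * (X + Y) ^ 2 ≤ 2 * E * (X + Y) := by
    nlinarith [mul_nonneg (sub_nonneg.2 (min_le_left δ γ)) (sq_nonneg X),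
      mul_nonneg (sub_nonneg.2 (min_le_right δ γ)) (sq_nonneg Y), sq_nonneg (X - Y)]
  rw [le_div_iff₀ hm]
  rcases (add_nonneg hX hY).eq_or_lt with h0 | hpos
  · rw [← h0, zero_mul]; positivity
  · nlinarith

theorem le_mul_iInf_add_iInf {ι κ : Sort*} [Nonempty ι] [Nonempty κ] {A C : ℝ} (hC : 0 < C)
    {f : ι → ℝ} {g : κ → ℝ} (h : ∀ i j, A ≤ C * (f i + g j)) : A ≤ C * (iInf f + iInf g) := by
  rw [← div_le_iff₀' hC]
  exact le_ciInf_add_ciInf fun i j => (div_le_iff₀' hC).2 (h i j)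

noncomputable def discreteErrorConstant (Ma Mb CV P αξ cs : ℝ) : ℝ :=
  2 * ((cs + 1) * (1 + P) + CV * (Ma + Mb)) / min (αξ - cs ^ 2 / 2) (1 / 2)

theorem discreteErrorConstant_nonneg {Ma Mb CV P αξ cs : ℝ} (hMa : 0 ≤ Ma) (hMb : 0 ≤ Mb)
    (hCV : 0 ≤ CV) (hP : 0 ≤ P) (hcs : 0 ≤ cs) (hsmall : cs ^ 2 < 2 * αξ) :
    0 ≤ discreteErrorConstant Ma Mb CV P αξ cs := by
  have : 0 < min (αξ - cs ^ 2 / 2) (1 / 2) := lt_min (by linarith) (by norm_num)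
  unfold discreteErrorConstant
  positivity

noncomputable def errorConstant (Ma Mb β CV CF P K : ℝ) : ℝ :=
  (1 + CF) * (2 + CV * K + (CF * (Ma * (1 + CV * K) + Mb) + P * (1 + CF) * K) / β)

theorem errorConstant_pos {Ma Mb β CV CF P K : ℝ} (hMa : 0 ≤ Ma) (hMb : 0 ≤ Mb) (hCV : 0 ≤ CV)
    (hCF : 0 ≤ CF) (hP : 0 ≤ P) (hK : 0 ≤ K) (hβ : 0 < β) :
    0 < errorConstant Ma Mb β CV CF P K := by
  unfold errorConstant
  positivity

section StabilisedSaddlePoint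

variable {V L : Type*} [NormedAddCommGroup V] [NormedSpace ℝ V]
  [NormedAddCommGroup L] [NormedSpace ℝ L]
  {a : V →ₗ[ℝ] V →ₗ[ℝ] ℝ} {b : L →ₗ[ℝ] V →ₗ[ℝ] ℝ} {s : L →ₗ[ℝ] L →ₗ[ℝ] ℝ}
  {Vh : Submodule ℝ V} {Lh Λh : Submodule ℝ L}

theorem abs_apply_le_of_orthogonal {πL : L →ₗ[ℝ] L} {nLh : L → ℝ} {Cπ Cs : ℝ}
    (hCπ : 0 ≤ Cπ) (hCs : 0 ≤ Cs) (hπL_mem : ∀ x ∈ Λh, πL x ∈ Lh)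
    (hπL_cont : ∀ x ∈ Λh, ∀ v : V, |b (x - πL x) v| ≤ Cπ * nLh (x - πL x) * ‖v‖)
    (hs_stab : ∀ x ∈ Λh, nLh (x - πL x) ^ 2 ≤ Cs * s x x)
    {x : L} (hx : x ∈ Λh) {v : V} (hv : ∀ μ ∈ Lh, b μ v = 0) :
    |b x v| ≤ Cπ * √Cs * √(s x x) * ‖v‖ := by
  have hnLh : nLh (x - πL x) ≤ √Cs * √(s x x) := by
    rw [← sqrt_mul hCs]
    exact (le_abs_self _).trans (abs_le_sqrt (hs_stab x hx))
  calc |b x v| = |b (x - πL x) v| := by rw [LinearMap.map_sub₂, hv _ (hπL_mem x hx), sub_zero]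
    _ ≤ Cπ * nLh (x - πL x) * ‖v‖ := hπL_cont x hx v
    _ ≤ Cπ * (√Cs * √(s x x)) * ‖v‖ := by gcongr
    _ = Cπ * √Cs * √(s x x) * ‖v‖ := by ring

variable {F : V →L[ℝ] ℝ} {u uh w : V} {lam lamh ν : L}

theorem galerkin_orthogonality
    (hcont : ∀ (v : V) (μ : L), a u v + b lam v + b μ u = F v)
    (hdisc : ∀ v ∈ Vh, ∀ μ ∈ Λh, a uh v + b lamh v + b μ uh - s lamh μ = F v)
    {v : V} (hv : v ∈ Vh) : a (u - uh) v + b (lam - lamh) v = 0 := by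
  have hc := hcont v 0
  have hd := hdisc v hv 0 Λh.zero_mem
  simp only [map_zero, LinearMap.zero_apply, add_zero, sub_zero] at hc hd
  simp only [LinearMap.map_sub₂]
  linarith

theorem apply_error_eq_neg_stab
    (hcont : ∀ (v : V) (μ : L), a u v + b lam v + b μ u = F v)
    (hdisc : ∀ v ∈ Vh, ∀ μ ∈ Λh, a uh v + b lamh v + b μ uh - s lamh μ = F v)
    {μ : L} (hμ : μ ∈ Λh) : b μ (u - uh) = - s lamh μ := by
  have hc := hcont 0 μ
  have hd := hdisc 0 Vh.zero_mem μ hμ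
  simp only [map_zero, zero_add] at hc hd
  rw [map_sub]
  linarith

variable {P : ℝ}

theorem coercivity_estimate {ξh : V → L} {nVh : V → ℝ} {αξ cs : ℝ} (hP : 0 ≤ P)
    (hs_symm : ∀ x ∈ Λh, ∀ y ∈ Λh, s x y = s y x) (hs_pos : ∀ x ∈ Λh, 0 ≤ s x x)
    (hb_orth : ∀ x ∈ Λh, ∀ v : V, (∀ μ ∈ Lh, b μ v = 0) → |b x v| ≤ P * √(s x x) * ‖v‖)
    (hξh_mem : ∀ u ∈ Vh, ξh u ∈ Λh)
    (hcoer : ∀ u ∈ Vh, αξ * nVh u ^ 2 ≤ a u u + b (ξh u) u)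
    (hξs : ∀ u ∈ Vh, √(s (ξh u) (ξh u)) ≤ cs * nVh u)
    (hG2 : ∀ μ ∈ Λh, b μ (u - uh) = - s lamh μ)
    (he : uh - w ∈ Vh) (hg : lamh - ν ∈ Λh) (hν : ν ∈ Λh) (hr : ∀ μ ∈ Lh, b μ (u - w) = 0) :
    αξ * nVh (uh - w) ^ 2 ≤ a (uh - w) (uh - w) +
      cs * nVh (uh - w) * (√(s (lamh - ν) (lamh - ν)) + √(s ν ν) + P * ‖u - w‖) := by
  set ξ := ξh (uh - w)
  have hξ : ξ ∈ Λh := hξh_mem _ he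
  have hbξ : b ξ (uh - w) = s (lamh - ν) ξ + s ν ξ + b ξ (u - w) := by
    have := hG2 ξ hξ
    simp only [map_sub, LinearMap.sub_apply] at this ⊢
    linarith
  have hbξ_le : b ξ (uh - w) ≤
      √(s ξ ξ) * (√(s (lamh - ν) (lamh - ν)) + √(s ν ν) + P * ‖u - w‖) := by
    have h1 := abs_apply_le_sqrt_mul_sqrt s hs_symm hs_pos hg hξ
    have h2 := abs_apply_le_sqrt_mul_sqrt s hs_symm hs_pos hν hξ
    have h3 := hb_orth ξ hξ _ hr
    linarith [le_abs_self (s (lamh - ν) ξ), le_abs_self (s ν ξ), le_abs_self (b ξ (u - w))]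
  have hsum : 0 ≤ √(s (lamh - ν) (lamh - ν)) + √(s ν ν) + P * ‖u - w‖ := by positivity
  calc αξ * nVh (uh - w) ^ 2 ≤ a (uh - w) (uh - w) + b ξ (uh - w) := hcoer _ he
    _ ≤ _ := by
      gcongr
      exact hbξ_le.trans (mul_le_mul_of_nonneg_right (hξs _ he) hsum)

theorem energy_estimate {nVh : V → ℝ} {Ma Mb CV : ℝ} (hMa : 0 ≤ Ma) (hMb : 0 ≤ Mb)
    (ha_cont : ∀ u v : V, |a u v| ≤ Ma * ‖u‖ * ‖v‖)
    (hb_cont : ∀ (lam : L) (v : V), |b lam v| ≤ Mb * ‖lam‖ * ‖v‖)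
    (hV_comp : ∀ v ∈ Vh, ‖v‖ ≤ CV * nVh v)
    (hs_symm : ∀ x ∈ Λh, ∀ y ∈ Λh, s x y = s y x) (hs_pos : ∀ x ∈ Λh, 0 ≤ s x x)
    (hb_orth : ∀ x ∈ Λh, ∀ v : V, (∀ μ ∈ Lh, b μ v = 0) → |b x v| ≤ P * √(s x x) * ‖v‖)
    (hG1 : ∀ v ∈ Vh, a (u - uh) v + b (lam - lamh) v = 0)
    (hG2 : ∀ μ ∈ Λh, b μ (u - uh) = - s lamh μ)
    (he : uh - w ∈ Vh) (hg : lamh - ν ∈ Λh) (hν : ν ∈ Λh) (hr : ∀ μ ∈ Lh, b μ (u - w) = 0) :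
    a (uh - w) (uh - w) + s (lamh - ν) (lamh - ν) ≤
      CV * nVh (uh - w) * (Ma * ‖u - w‖ + Mb * ‖lam - ν‖) +
        √(s (lamh - ν) (lamh - ν)) * (√(s ν ν) + P * ‖u - w‖) := by
  have henergy : a (uh - w) (uh - w) + s (lamh - ν) (lamh - ν) =
      a (u - w) (uh - w) + b (lam - ν) (uh - w) - s ν (lamh - ν) - b (lamh - ν) (u - w) := by
    have h1 := hG1 _ he
    have h2 := hG2 _ hg
    simp only [map_sub, LinearMap.sub_apply] at h1 h2 ⊢
    linarith
  have hnorm := hV_comp _ he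
  have h1 : a (u - w) (uh - w) ≤ Ma * ‖u - w‖ * (CV * nVh (uh - w)) :=
    (le_abs_self _).trans ((ha_cont _ _).trans (by gcongr))
  have h2 : b (lam - ν) (uh - w) ≤ Mb * ‖lam - ν‖ * (CV * nVh (uh - w)) :=
    (le_abs_self _).trans ((hb_cont _ _).trans (by gcongr))
  have h3 := abs_apply_le_sqrt_mul_sqrt s hs_symm hs_pos hν hg
  have h4 := hb_orth _ hg _ hr
  linarith [neg_abs_le (s ν (lamh - ν)), neg_abs_le (b (lamh - ν) (u - w))]

theorem discrete_error_le {ξh : V → L} {nVh : V → ℝ} {Ma Mb CV αξ cs : ℝ}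
    (hMa : 0 ≤ Ma) (hMb : 0 ≤ Mb) (hCV : 0 ≤ CV) (hP : 0 ≤ P) (hcs : 0 ≤ cs)
    (ha_cont : ∀ u v : V, |a u v| ≤ Ma * ‖u‖ * ‖v‖)
    (hb_cont : ∀ (lam : L) (v : V), |b lam v| ≤ Mb * ‖lam‖ * ‖v‖)
    (hnVh_nonneg : ∀ v ∈ Vh, 0 ≤ nVh v) (hV_comp : ∀ v ∈ Vh, ‖v‖ ≤ CV * nVh v)
    (hs_symm : ∀ x ∈ Λh, ∀ y ∈ Λh, s x y = s y x) (hs_pos : ∀ x ∈ Λh, 0 ≤ s x x)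
    (hb_orth : ∀ x ∈ Λh, ∀ v : V, (∀ μ ∈ Lh, b μ v = 0) → |b x v| ≤ P * √(s x x) * ‖v‖)
    (hξh_mem : ∀ u ∈ Vh, ξh u ∈ Λh)
    (hcoer : ∀ u ∈ Vh, αξ * nVh u ^ 2 ≤ a u u + b (ξh u) u)
    (hξs : ∀ u ∈ Vh, √(s (ξh u) (ξh u)) ≤ cs * nVh u) (hsmall : cs ^ 2 < 2 * αξ)
    (hG1 : ∀ v ∈ Vh, a (u - uh) v + b (lam - lamh) v = 0)
    (hG2 : ∀ μ ∈ Λh, b μ (u - uh) = - s lamh μ)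
    (he : uh - w ∈ Vh) (hg : lamh - ν ∈ Λh) (hν : ν ∈ Λh) (hr : ∀ μ ∈ Lh, b μ (u - w) = 0) :
    nVh (uh - w) + √(s (lamh - ν) (lamh - ν)) ≤
      discreteErrorConstant Ma Mb CV P αξ cs * (‖u - w‖ + ‖lam - ν‖ + √(s ν ν)) := by
  set X := nVh (uh - w)
  set Y := √(s (lamh - ν) (lamh - ν))
  set D := ‖u - w‖ + ‖lam - ν‖ + √(s ν ν)
  have hX : 0 ≤ X := hnVh_nonneg _ he
  have hY : 0 ≤ Y := sqrt_nonneg _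
  have hY2 : Y ^ 2 = s (lamh - ν) (lamh - ν) := sq_sqrt (hs_pos _ hg)
  have hcoer' := coercivity_estimate hP hs_symm hs_pos hb_orth hξh_mem hcoer hξs hG2 he hg hν hr
  have henergy := energy_estimate hMa hMb ha_cont hb_cont hV_comp hs_symm hs_pos hb_orth hG1 hG2
    he hg hν hr
  have hZ : √(s ν ν) ≤ D := by linarith [norm_nonneg (u - w), norm_nonneg (lam - ν)]
  have hR : ‖u - w‖ ≤ D := by linarith [sqrt_nonneg (s ν ν), norm_nonneg (lam - ν)]
  have hM : ‖lam - ν‖ ≤ D := by linarith [sqrt_nonneg (s ν ν), norm_nonneg (u - w)]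
  have hD : 0 ≤ D := hZ.trans' (sqrt_nonneg _)
  have hB : √(s ν ν) + P * ‖u - w‖ ≤ (1 + P) * D := by
    rw [add_mul, one_mul]; gcongr
  have hE : Ma * ‖u - w‖ + Mb * ‖lam - ν‖ ≤ (Ma + Mb) * D := by
    rw [add_mul]; gcongr
  set K := (cs + 1) * (1 + P) + CV * (Ma + Mb) with hK
  have hA : cs * (√(s ν ν) + P * ‖u - w‖) + CV * (Ma * ‖u - w‖ + Mb * ‖lam - ν‖) ≤ K * D := by
    calc _ ≤ cs * ((1 + P) * D) + CV * ((Ma + Mb) * D) := by gcongr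
      _ ≤ K * D := by rw [hK]; nlinarith
  have hBK : √(s ν ν) + P * ‖u - w‖ ≤ K * D := by
    rw [hK]; nlinarith [mul_nonneg (mul_nonneg hcs (by positivity : 0 ≤ 1 + P)) hD,
      mul_nonneg (mul_nonneg hCV (add_nonneg hMa hMb)) hD]
  have hquad : (αξ - cs ^ 2 / 2) * X ^ 2 + 1 / 2 * Y ^ 2 ≤ (X + Y) * (K * D) := by
    nlinarith [sq_nonneg (cs * X - Y), mul_le_mul_of_nonneg_left hA hX,
      mul_le_mul_of_nonneg_left hBK hY]
  calc X + Y ≤ 2 * (K * D) / min (αξ - cs ^ 2 / 2) (1 / 2) :=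
        add_le_of_mul_sq_add_mul_sq_le hX hY (by positivity) (by linarith) (by norm_num) hquad
    _ = discreteErrorConstant Ma Mb CV P αξ cs * D := by
      unfold discreteErrorConstant; ring

theorem multiplier_error_le {πF : V →ₗ[ℝ] V} {Ma Mb β CF : ℝ}
    (hMa : 0 ≤ Ma) (hMb : 0 ≤ Mb) (hCF : 0 ≤ CF) (hP : 0 ≤ P)
    (ha_cont : ∀ u v : V, |a u v| ≤ Ma * ‖u‖ * ‖v‖)
    (hb_cont : ∀ (lam : L) (v : V), |b lam v| ≤ Mb * ‖lam‖ * ‖v‖)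
    (h_infsup : ∀ lam : L, β * ‖lam‖ ≤ ⨆ v : {v : V // v ≠ 0}, b lam v.1 / ‖v.1‖)
    (hπF_mem : ∀ v : V, πF v ∈ Vh) (hπF_orth : ∀ μ ∈ Lh, ∀ v : V, b μ (v - πF v) = 0)
    (hπF_stab : ∀ v : V, ‖πF v‖ ≤ CF * ‖v‖)
    (hb_orth : ∀ x ∈ Λh, ∀ v : V, (∀ μ ∈ Lh, b μ v = 0) → |b x v| ≤ P * √(s x x) * ‖v‖)
    (hG1 : ∀ v ∈ Vh, a (u - uh) v + b (lam - lamh) v = 0) (hg : lamh - ν ∈ Λh) :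
    β * ‖lamh - ν‖ ≤
      CF * (Ma * ‖u - uh‖ + Mb * ‖lam - ν‖) + P * (1 + CF) * √(s (lamh - ν) (lamh - ν)) := by
  refine (h_infsup _).trans (iSup_div_norm_le (by positivity) fun v => ?_)
  have hFortin : b (lamh - ν) (πF v) = a (u - uh) (πF v) + b (lam - ν) (πF v) := by
    have := hG1 _ (hπF_mem v)
    simp only [LinearMap.map_sub₂] at this ⊢
    linarith
  have h1 : a (u - uh) (πF v) ≤ Ma * ‖u - uh‖ * (CF * ‖v‖) :=
    (le_abs_self _).trans ((ha_cont _ _).trans (by gcongr; exact hπF_stab v))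
  have h2 : b (lam - ν) (πF v) ≤ Mb * ‖lam - ν‖ * (CF * ‖v‖) :=
    (le_abs_self _).trans ((hb_cont _ _).trans (by gcongr; exact hπF_stab v))
  have h3 : b (lamh - ν) (v - πF v) ≤ P * √(s (lamh - ν) (lamh - ν)) * ((1 + CF) * ‖v‖) := by
    refine (le_abs_self _).trans ((hb_orth _ hg _ fun μ hμ => hπF_orth μ hμ v).trans ?_)
    gcongr
    linarith [norm_sub_le v (πF v), hπF_stab v]
  have hsplit : b (lamh - ν) v = b (lamh - ν) (πF v) + b (lamh - ν) (v - πF v) := by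
    rw [(b (lamh - ν)).map_sub]; ring
  rw [hsplit, hFortin]
  linarith

theorem error_le_errorConstant_mul {nVh : V → ℝ} {y : V} {Ma Mb β CV CF K : ℝ}
    (hMa : 0 ≤ Ma) (hMb : 0 ≤ Mb) (hCV : 0 ≤ CV) (hCF : 0 ≤ CF) (hP : 0 ≤ P) (hK : 0 ≤ K)
    (hβ : 0 < β) (hV_comp : ∀ v ∈ Vh, ‖v‖ ≤ CV * nVh v) (he : uh - w ∈ Vh)
    (hX : 0 ≤ nVh (uh - w))
    (hdiscrete : nVh (uh - w) + √(s (lamh - ν) (lamh - ν)) ≤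
      K * (‖u - w‖ + ‖lam - ν‖ + √(s ν ν)))
    (hmultiplier : β * ‖lamh - ν‖ ≤
      CF * (Ma * ‖u - uh‖ + Mb * ‖lam - ν‖) + P * (1 + CF) * √(s (lamh - ν) (lamh - ν)))
    (hproj : ‖u - w‖ ≤ (1 + CF) * ‖u - y‖) :
    ‖u - uh‖ + ‖lam - lamh‖ ≤
      errorConstant Ma Mb β CV CF P K * (‖u - y‖ + (‖lam - ν‖ + √(s ν ν))) := by
  set D := ‖u - w‖ + ‖lam - ν‖ + √(s ν ν)
  have hY : 0 ≤ √(s (lamh - ν) (lamh - ν)) := sqrt_nonneg _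
  have hM := norm_nonneg (lam - ν)
  have hZ : 0 ≤ √(s ν ν) := sqrt_nonneg _
  have hXD : nVh (uh - w) ≤ K * D := by linarith
  have hYD : √(s (lamh - ν) (lamh - ν)) ≤ K * D := by linarith
  have hprimal : ‖u - uh‖ ≤ (1 + CV * K) * D := by
    calc ‖u - uh‖ ≤ ‖u - w‖ + ‖uh - w‖ := norm_sub_rev uh w ▸ norm_sub_le_norm_sub_add_norm_sub _ _ _
      _ ≤ ‖u - w‖ + CV * nVh (uh - w) := by gcongr; exact hV_comp _ he
      _ ≤ D + CV * (K * D) := by gcongr; linarith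
      _ = (1 + CV * K) * D := by ring
  have hmult : ‖lamh - ν‖ ≤ (CF * (Ma * (1 + CV * K) + Mb) + P * (1 + CF) * K) / β * D := by
    rw [div_mul_eq_mul_div, le_div_iff₀' hβ]
    calc β * ‖lamh - ν‖ ≤ CF * (Ma * ((1 + CV * K) * D) + Mb * D) + P * (1 + CF) * (K * D) := by
          refine hmultiplier.trans ?_
          gcongr
          linarith [norm_nonneg (u - w)]
      _ = (CF * (Ma * (1 + CV * K) + Mb) + P * (1 + CF) * K) * D := by ring
  have hlam : ‖lam - lamh‖ ≤ ‖lam - ν‖ + ‖lamh - ν‖ :=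
    norm_sub_rev lamh ν ▸ norm_sub_le_norm_sub_add_norm_sub _ _ _
  have hD : D ≤ (1 + CF) * (‖u - y‖ + (‖lam - ν‖ + √(s ν ν))) := by
    nlinarith
  calc ‖u - uh‖ + ‖lam - lamh‖
      ≤ (2 + CV * K + (CF * (Ma * (1 + CV * K) + Mb) + P * (1 + CF) * K) / β) * D := by
        nlinarith [norm_nonneg (u - w)]
    _ ≤ (2 + CV * K + (CF * (Ma * (1 + CV * K) + Mb) + P * (1 + CF) * K) / β) *
          ((1 + CF) * (‖u - y‖ + (‖lam - ν‖ + √(s ν ν)))) := by gcongr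
    _ = errorConstant Ma Mb β CV CF P K * (‖u - y‖ + (‖lam - ν‖ + √(s ν ν))) := by
      unfold errorConstant; ring

end StabilisedSaddlePoint

theorem best_approximation_projection_stabilised_general
    {V L : Type*} [NormedAddCommGroup V] [NormedSpace ℝ V]
    [NormedAddCommGroup L] [NormedSpace ℝ L]
    -- bilinear forms and their continuity
    (a : V →ₗ[ℝ] V →ₗ[ℝ] ℝ) (b : L →ₗ[ℝ] V →ₗ[ℝ] ℝ)
    (Ma : ℝ) (hMa : 0 < Ma)
    (ha_cont : ∀ u v : V, |a u v| ≤ Ma * ‖u‖ * ‖v‖)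
    (Mb : ℝ) (hMb : 0 < Mb)
    (hb_cont : ∀ (lam : L) (v : V), |b lam v| ≤ Mb * ‖lam‖ * ‖v‖)
    -- continuous inf-sup condition
    (β : ℝ) (hβ : 0 < β)
    (h_infsup : ∀ lam : L, β * ‖lam‖ ≤ ⨆ v : {v : V // v ≠ 0}, b lam v.1 / ‖v.1‖)
    -- discrete subspaces
    (Vh : Submodule ℝ V) (Lh Λh : Submodule ℝ L)
    -- discrete norm on V_h
    (nVh : V → ℝ) (CV : ℝ) (hCV : 0 < CV)
    (hnVh_nonneg : ∀ v ∈ Vh, 0 ≤ nVh v)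
    (hV_comp : ∀ v ∈ Vh, ‖v‖ ≤ CV * nVh v)
    -- discrete norm on L_h + Λ_h
    (nLh : L → ℝ)
    -- Fortin operator
    (πF : V →ₗ[ℝ] V) (hπF_mem : ∀ v : V, πF v ∈ Vh)
    (hπF_orth : ∀ μ ∈ Lh, ∀ v : V, b μ (v - πF v) = 0)
    (hπF_proj : ∀ v ∈ Vh, πF v = v)
    (CF : ℝ) (hCF : 0 < CF)
    (hπF_stab : ∀ v : V, ‖πF v‖ ≤ CF * ‖v‖)
    -- stabilising projection π_L : Λ_h → L_h
    (πL : L →ₗ[ℝ] L) (hπL_mem : ∀ x ∈ Λh, πL x ∈ Lh)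
    (Cπ : ℝ) (hCπ : 0 < Cπ)
    (hπL_cont : ∀ x ∈ Λh, ∀ v : V, |b (x - πL x) v| ≤ Cπ * nLh (x - πL x) * ‖v‖)
    -- stabilisation form: symmetric, positive semidefinite, controlling the projection error
    (s : L →ₗ[ℝ] L →ₗ[ℝ] ℝ)
    (hs_symm : ∀ x ∈ Λh, ∀ y ∈ Λh, s x y = s y x)
    (hs_pos : ∀ x ∈ Λh, 0 ≤ s x x)
    (Cs : ℝ) (hCs : 0 < Cs)
    (hs_stab : ∀ x ∈ Λh, nLh (x - πL x) ^ 2 ≤ Cs * s x x)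
    -- coercivity assumption
    (ξh : V → L) (hξh_mem : ∀ u ∈ Vh, ξh u ∈ Λh)
    (αξ cs : ℝ) (hcs : 0 ≤ cs)
    (hcoer : ∀ u ∈ Vh, αξ * nVh u ^ 2 ≤ a u u + b (ξh u) u)
    (hξs : ∀ u ∈ Vh, Real.sqrt (s (ξh u) (ξh u)) ≤ cs * nVh u)
    (hsmall : cs ^ 2 < 2 * αξ) :
    ∃ C > 0, ∀ (F : V →L[ℝ] ℝ) (u : V) (lam : L) (uh : V) (lamh : L),
      uh ∈ Vh → lamh ∈ Λh →
      -- continuous problem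
      (∀ (v : V) (μ : L), a u v + b lam v + b μ u = F v) →
      -- stabilised discrete problem
      (∀ v ∈ Vh, ∀ μ ∈ Λh, a uh v + b lamh v + b μ uh - s lamh μ = F v) →
      ‖u - uh‖ + ‖lam - lamh‖ ≤
        C * ((⨅ y : Vh, ‖u - (y : V)‖) +
          ⨅ ν : Λh, (‖lam - (ν : L)‖ + Real.sqrt (s (ν : L) (ν : L)))) := by
  have hP : 0 ≤ Cπ * √Cs := by positivity
  have hK := discreteErrorConstant_nonneg hMa.le hMb.le hCV.le hP hcs hsmall
  have hC := errorConstant_pos hMa.le hMb.le hCV.le hCF.le hP hK hβ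
  refine ⟨_, hC, fun F u lam uh lamh huh hlamh hcont hdisc => ?_⟩
  have hG1 (v) (hv : v ∈ Vh) := galerkin_orthogonality (Λh := Λh) hcont hdisc hv
  have hG2 (μ) (hμ : μ ∈ Λh) := apply_error_eq_neg_stab hcont hdisc hμ
  have hb_orth (x) (hx : x ∈ Λh) (v : V) (hv : ∀ μ ∈ Lh, b μ v = 0) :=
    abs_apply_le_of_orthogonal hCπ.le hCs.le hπL_mem hπL_cont hs_stab hx hv
  have he : uh - πF u ∈ Vh := Vh.sub_mem huh (hπF_mem u)
  have hr (μ) (hμ : μ ∈ Lh) : b μ (u - πF u) = 0 := hπF_orth μ hμ u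
  have : Nonempty Vh := ⟨0⟩
  have : Nonempty Λh := ⟨0⟩
  refine le_mul_iInf_add_iInf hC fun y ν => ?_
  have hg : lamh - ν ∈ Λh := Λh.sub_mem hlamh ν.2
  exact error_le_errorConstant_mul hMa.le hMb.le hCV.le hCF.le hP hK hβ hV_comp he
    (hnVh_nonneg _ he)
    (discrete_error_le hMa.le hMb.le hCV.le hP hcs ha_cont hb_cont hnVh_nonneg hV_comp hs_symm
      hs_pos hb_orth hξh_mem hcoer hξs hsmall hG1 hG2 he hg ν.2 hr)
    (multiplier_error_le hMa.le hMb.le hCF.le hP ha_cont hb_cont h_infsup hπF_mem hπF_orth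
      hπF_stab hb_orth hG1 hg)
    (norm_sub_apply_le_of_apply_eq πF hπF_stab (hπF_proj y y.2) u)

/-- **Best approximation for the projection-stabilised Lagrange multiplier method
(Theorem 2.3, error estimate).**
If `(u, λ)` solves the continuous problem and `(u_h, λ_h)` solves the stabilised discrete
problem with the same right-hand side `F`, then
`‖u − u_h‖_V + ‖λ − λ_h‖_L ≤ C (inf_{y_h ∈ V_h} ‖u − y_h‖_V
  + inf_{ν_h ∈ Λ_h} (‖λ − ν_h‖_L + s(ν_h,ν_h)^{1/2}))`
with `C` depending only on the constants of the framework, not on `u`, `λ` or `F`. -/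
theorem best_approximation_projection_stabilised
    {V L : Type*} [NormedAddCommGroup V] [NormedSpace ℝ V]
    [NormedAddCommGroup L] [NormedSpace ℝ L]
    -- bilinear forms and their continuity
    (a : V →ₗ[ℝ] V →ₗ[ℝ] ℝ) (b : L →ₗ[ℝ] V →ₗ[ℝ] ℝ)
    (Ma : ℝ) (hMa : 0 < Ma)
    (ha_cont : ∀ u v : V, |a u v| ≤ Ma * ‖u‖ * ‖v‖)
    (Mb : ℝ) (hMb : 0 < Mb)
    (hb_cont : ∀ (lam : L) (v : V), |b lam v| ≤ Mb * ‖lam‖ * ‖v‖)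
    -- continuous inf-sup condition
    (β : ℝ) (hβ : 0 < β)
    (h_infsup : ∀ lam : L, β * ‖lam‖ ≤ ⨆ v : {v : V // v ≠ 0}, b lam v.1 / ‖v.1‖)
    -- discrete subspaces
    (Vh : Submodule ℝ V) (Lh Λh : Submodule ℝ L)
    -- discrete norm on V_h
    (nVh : V → ℝ) (CV : ℝ) (hCV : 0 < CV)
    (hnVh_nonneg : ∀ v ∈ Vh, 0 ≤ nVh v)
    (hnVh_def : ∀ v ∈ Vh, nVh v = 0 → v = 0)
    (hnVh_add : ∀ v ∈ Vh, ∀ w ∈ Vh, nVh (v + w) ≤ nVh v + nVh w)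
    (hnVh_smul : ∀ (r : ℝ), ∀ v ∈ Vh, nVh (r • v) = |r| * nVh v)
    (hV_comp : ∀ v ∈ Vh, ‖v‖ ≤ CV * nVh v)
    -- discrete norm on L_h + Λ_h
    (nLh : L → ℝ)
    (hnLh_nonneg : ∀ x ∈ Lh ⊔ Λh, 0 ≤ nLh x)
    (hnLh_def : ∀ x ∈ Lh ⊔ Λh, nLh x = 0 → x = 0)
    (hnLh_add : ∀ x ∈ Lh ⊔ Λh, ∀ y ∈ Lh ⊔ Λh, nLh (x + y) ≤ nLh x + nLh y)
    (hnLh_smul : ∀ (r : ℝ), ∀ x ∈ Lh ⊔ Λh, nLh (r • x) = |r| * nLh x)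
    -- discrete continuities
    (ha_disc : ∀ u ∈ Vh, ∀ v ∈ Vh, |a u v| ≤ nVh u * nVh v)
    (hb_disc : ∀ lam ∈ Lh ⊔ Λh, ∀ v ∈ Vh, |b lam v| ≤ nLh lam * nVh v)
    -- Fortin operator
    (πF : V →ₗ[ℝ] V) (hπF_mem : ∀ v : V, πF v ∈ Vh)
    (hπF_orth : ∀ μ ∈ Lh, ∀ v : V, b μ (v - πF v) = 0)
    (hπF_proj : ∀ v ∈ Vh, πF v = v)
    (CF : ℝ) (hCF : 0 < CF)
    (hπF_stab : ∀ v : V, ‖πF v‖ ≤ CF * ‖v‖)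
    -- stabilising projection π_L : Λ_h → L_h
    (πL : L →ₗ[ℝ] L) (hπL_mem : ∀ x ∈ Λh, πL x ∈ Lh)
    (Cπ : ℝ) (hCπ : 0 < Cπ)
    (hπL_cont : ∀ x ∈ Λh, ∀ v : V, |b (x - πL x) v| ≤ Cπ * nLh (x - πL x) * ‖v‖)
    -- stabilisation form: symmetric, positive semidefinite, controlling the projection error
    (s : L →ₗ[ℝ] L →ₗ[ℝ] ℝ)
    (hs_symm : ∀ x ∈ Λh, ∀ y ∈ Λh, s x y = s y x)
    (hs_pos : ∀ x ∈ Λh, 0 ≤ s x x)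
    (Cs : ℝ) (hCs : 0 < Cs)
    (hs_stab : ∀ x ∈ Λh, nLh (x - πL x) ^ 2 ≤ Cs * s x x)
    -- coercivity assumption
    (ξh : V → L) (hξh_mem : ∀ u ∈ Vh, ξh u ∈ Λh)
    (αξ cs : ℝ) (hαξ : 0 < αξ) (hcs : 0 ≤ cs)
    (hcoer : ∀ u ∈ Vh, αξ * nVh u ^ 2 ≤ a u u + b (ξh u) u)
    (hξs : ∀ u ∈ Vh, Real.sqrt (s (ξh u) (ξh u)) ≤ cs * nVh u)
    (hsmall : cs ^ 2 < 2 * αξ) :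
    ∃ C > 0, ∀ (F : V →L[ℝ] ℝ) (u : V) (lam : L) (uh : V) (lamh : L),
      uh ∈ Vh → lamh ∈ Λh →
      -- continuous problem
      (∀ (v : V) (μ : L), a u v + b lam v + b μ u = F v) →
      -- stabilised discrete problem
      (∀ v ∈ Vh, ∀ μ ∈ Λh, a uh v + b lamh v + b μ uh - s lamh μ = F v) →
      ‖u - uh‖ + ‖lam - lamh‖ ≤
        C * ((⨅ y : Vh, ‖u - (y : V)‖) +
          ⨅ ν : Λh, (‖lam - (ν : L)‖ + Real.sqrt (s (ν : L) (ν : L)))) :=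
  best_approximation_projection_stabilised_general a b Ma hMa ha_cont Mb hMb hb_cont β hβ h_infsup
    Vh Lh Λh nVh CV hCV hnVh_nonneg hV_comp nLh πF hπF_mem hπF_orth hπF_proj CF hCF hπF_stab πL
    hπL_mem Cπ hCπ hπL_cont s hs_symm hs_pos Cs hCs hs_stab ξh hξh_mem αξ cs hcs hcoer hξs hsmall
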